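/- arXiv:2502.00815 — 3 statements merged into one kernel-verified Lean document; each statement's English description precedes it below -/
import Mathlib

section
/- If 0 < a < 1 and s ≥ 0 satisfy a^s + 2((1-a²)/2)^s = 1, then s ≤ log 4 / log 3. -/
noncomputable def kochTheta : ℝ := Real.log 2 / Real.log 3

noncomputable def kochF : ℝ → ℝ :=
  fun x => x ^ kochTheta + 2 * ((1 - x) / 2) ^ (2 * kochTheta)

noncomputable def kochR : ℝ → ℝ := fun x =>
  (kochTheta - 1) * Real.log x - (2 * kochTheta - 1) * Real.log ((1 - x) / 2) - Real.log 2

lemma log2_pos : (0:ℝ) < Real.log 2 := Real.log_pos (by norm_num)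
lemma log3_pos : (0:ℝ) < Real.log 3 := Real.log_pos (by norm_num)

lemma theta_gt : (1:ℝ)/2 < kochTheta := by
  have h34 : Real.log 3 < Real.log 4 := Real.log_lt_log (by norm_num) (by norm_num)
  have h4 : Real.log 4 = 2 * Real.log 2 := by
    rw [show (4:ℝ) = 2^2 by norm_num, Real.log_pow]; push_cast; ring
  rw [kochTheta, lt_div_iff₀ log3_pos]; linarith

lemma theta_lt : kochTheta < 3/4 := by
  have h : Real.log 16 < Real.log 27 := Real.log_lt_log (by norm_num) (by norm_num)
  have h16 : Real.log 16 = 4 * Real.log 2 := by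
    rw [show (16:ℝ) = 2^4 by norm_num, Real.log_pow]; push_cast; ring
  have h27 : Real.log 27 = 3 * Real.log 3 := by
    rw [show (27:ℝ) = 3^3 by norm_num, Real.log_pow]; push_cast; ring
  rw [kochTheta, div_lt_iff₀ log3_pos]; linarith

lemma theta_pos : 0 < kochTheta := lt_trans (by norm_num) theta_gt

lemma theta_mul : kochTheta * Real.log 3 = Real.log 2 :=
  div_mul_cancel₀ _ log3_pos.ne'

lemma third_rpow : ((1:ℝ)/3) ^ kochTheta = 1/2 := by
  rw [Real.rpow_def_of_pos (by norm_num)]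
  have h : Real.log ((1:ℝ)/3) * kochTheta = -Real.log 2 := by
    rw [one_div, Real.log_inv]
    rw [← theta_mul]; ring
  rw [h, Real.exp_neg, Real.exp_log (by norm_num)]
  norm_num

lemma rpow_two_theta (x : ℝ) (hx : 0 ≤ x) :
    x ^ (2 * kochTheta) = (x ^ kochTheta) ^ 2 := by
  rw [mul_comm, Real.rpow_mul hx]
  rw [show ((2:ℝ)) = ((2:ℕ):ℝ) by norm_num, Real.rpow_natCast]

lemma kochF_third : kochF (1/3) = 1 := by
  unfold kochF
  rw [show ((1:ℝ) - 1/3)/2 = 1/3 by norm_num]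
  rw [rpow_two_theta _ (by norm_num), third_rpow]
  norm_num

lemma kochF_one : kochF 1 = 1 := by
  unfold kochF
  rw [show ((1:ℝ) - 1)/2 = 0 by norm_num, Real.one_rpow,
    Real.zero_rpow (mul_pos two_pos theta_pos).ne']
  norm_num

lemma kochR_third : kochR (1/3) = 0 := by
  unfold kochR
  rw [show ((1:ℝ) - 1/3)/2 = 1/3 by norm_num,
    show Real.log ((1:ℝ)/3) = -Real.log 3 by rw [one_div, Real.log_inv]]
  linear_combination theta_mul

lemma kochF_deriv {x : ℝ} (hx0 : 0 < x) (hx1 : x < 1) :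
    HasDerivAt kochF
      (kochTheta * (x ^ (kochTheta - 1) - 2 * ((1 - x)/2) ^ (2*kochTheta - 1))) x := by
  have hu : 0 < (1 - x)/2 := by linarith
  have h1 : HasDerivAt (fun x : ℝ => x ^ kochTheta)
      (kochTheta * x ^ (kochTheta - 1)) x :=
    Real.hasDerivAt_rpow_const (Or.inl hx0.ne')
  have hinner : HasDerivAt (fun x : ℝ => (1 - x)/2) ((0 - 1)/2) x :=
    ((hasDerivAt_const x (1:ℝ)).sub (hasDerivAt_id x)).div_const 2
  have h2 : HasDerivAt (fun x : ℝ => ((1 - x)/2) ^ (2*kochTheta))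
      ((2*kochTheta) * ((1 - x)/2) ^ (2*kochTheta - 1) * ((0 - 1)/2)) x :=
    by have := (Real.hasDerivAt_rpow_const (p := 2*kochTheta) (Or.inl hu.ne')).comp x hinner; exact this
  have := h1.add (h2.const_mul 2)
  refine this.congr_deriv ?_
  ring

lemma kochR_deriv {x : ℝ} (hx0 : 0 < x) (hx1 : x < 1) :
    HasDerivAt kochR ((kochTheta - 1)/x + (2*kochTheta - 1)/(1 - x)) x := by
  have hu : 0 < (1 - x)/2 := by linarith
  have h1 : HasDerivAt (fun x : ℝ => (kochTheta - 1) * Real.log x)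
      ((kochTheta - 1) * x⁻¹) x := (Real.hasDerivAt_log hx0.ne').const_mul _
  have hinner : HasDerivAt (fun x : ℝ => (1 - x)/2) ((0 - 1)/2) x :=
    ((hasDerivAt_const x (1:ℝ)).sub (hasDerivAt_id x)).div_const 2
  have h2 : HasDerivAt (fun x : ℝ => (2*kochTheta - 1) * Real.log ((1 - x)/2))
      ((2*kochTheta - 1) * (((1 - x)/2)⁻¹ * ((0 - 1)/2))) x :=
    (((Real.hasDerivAt_log hu.ne').comp x hinner)).const_mul _
  have h3 := (h1.sub h2).sub_const (Real.log 2)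
  refine h3.congr_deriv ?_
  have hx0' : x ≠ 0 := hx0.ne'
  have hx1' : (1:ℝ) - x ≠ 0 := by linarith
  field_simp
  ring

lemma kochR_eq {x : ℝ} (hx0 : 0 < x) (hx1 : x < 1) :
    kochR x = Real.log (x ^ (kochTheta - 1))
      - Real.log (2 * ((1 - x)/2) ^ (2*kochTheta - 1)) := by
  have hu : 0 < (1 - x)/2 := by linarith
  rw [Real.log_rpow hx0, Real.log_mul (by norm_num)
    (Real.rpow_pos_of_pos hu _).ne', Real.log_rpow hu]
  unfold kochR; ring

lemma derivF_nonneg {x : ℝ} (hx0 : 0 < x) (hx1 : x < 1) (h : 0 ≤ kochR x) :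
    0 ≤ deriv kochF x := by
  have hu : 0 < (1 - x)/2 := by linarith
  have hB : 0 < 2 * ((1 - x)/2) ^ (2*kochTheta - 1) := by positivity
  have hA : 0 < x ^ (kochTheta - 1) := Real.rpow_pos_of_pos hx0 _
  have hle : 2 * ((1 - x)/2) ^ (2*kochTheta - 1) ≤ x ^ (kochTheta - 1) := by
    rw [kochR_eq hx0 hx1] at h
    exact (Real.log_le_log_iff hB hA).mp (sub_nonneg.mp h)
  rw [(kochF_deriv hx0 hx1).deriv]
  have := theta_pos
  nlinarith

lemma derivF_nonpos {x : ℝ} (hx0 : 0 < x) (hx1 : x < 1) (h : kochR x ≤ 0) :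
    deriv kochF x ≤ 0 := by
  have hu : 0 < (1 - x)/2 := by linarith
  have hB : 0 < 2 * ((1 - x)/2) ^ (2*kochTheta - 1) := by positivity
  have hA : 0 < x ^ (kochTheta - 1) := Real.rpow_pos_of_pos hx0 _
  have hle : x ^ (kochTheta - 1) ≤ 2 * ((1 - x)/2) ^ (2*kochTheta - 1) := by
    rw [kochR_eq hx0 hx1] at h
    exact (Real.log_le_log_iff hA hB).mp (sub_nonpos.mp h)
  rw [(kochF_deriv hx0 hx1).deriv]
  have := theta_pos
  nlinarith

lemma contF : Continuous kochF := by
  unfold kochF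
  have h1 : Continuous fun x : ℝ => x ^ kochTheta :=
    continuous_id.rpow_const (fun x => Or.inr theta_pos.le)
  have h2 : Continuous fun x : ℝ => ((1 - x)/2) ^ (2*kochTheta) :=
    Continuous.rpow_const (by continuity) (fun x => Or.inr (by have := theta_pos; linarith))
  exact h1.add (continuous_const.mul h2)

lemma derivR_eq {y : ℝ} (hy0 : 0 < y) (hy1 : y < 1) :
    deriv kochR y = (kochTheta * y - (1 - kochTheta)) / (y * (1 - y)) := by
  rw [(kochR_deriv hy0 hy1).deriv]
  have hy0' : y ≠ 0 := hy0.ne'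
  have hy1' : (1:ℝ) - y ≠ 0 := by linarith
  field_simp
  ring

noncomputable def kochC : ℝ := (1 - kochTheta)/kochTheta

lemma third_lt_c : 1/3 < kochC := by
  have h1 := theta_pos
  have h2 := theta_lt
  rw [kochC, lt_div_iff₀ h1]; linarith

lemma c_lt_one : kochC < 1 := by
  have h1 := theta_pos
  have h2 := theta_gt
  rw [kochC, div_lt_iff₀ h1]; linarith

lemma Ranti : AntitoneOn kochR (Set.Ioc 0 kochC) := by
  have hc1 := c_lt_one
  apply antitoneOn_of_deriv_nonpos (convex_Ioc _ _)
  · intro y hy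
    exact ((kochR_deriv hy.1 (lt_of_le_of_lt hy.2 hc1)).continuousAt).continuousWithinAt
  · rw [interior_Ioc]
    intro y hy
    exact ((kochR_deriv hy.1 (lt_trans hy.2 hc1)).differentiableAt).differentiableWithinAt
  · rw [interior_Ioc]
    intro y hy
    have hy1 : y < 1 := lt_trans hy.2 hc1
    rw [derivR_eq hy.1 hy1]
    apply div_nonpos_of_nonpos_of_nonneg
    · have : kochTheta * y ≤ kochTheta * kochC := by
        exact mul_le_mul_of_nonneg_left hy.2.le theta_pos.le
      rw [kochC, mul_div_cancel₀ _ theta_pos.ne'] at this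
      linarith
    · exact mul_nonneg hy.1.le (by linarith)

lemma Rmono : MonotoneOn kochR (Set.Ico kochC 1) := by
  have hc0 : 0 < kochC := lt_trans (by norm_num) third_lt_c
  apply monotoneOn_of_deriv_nonneg (convex_Ico _ _)
  · intro y hy
    exact ((kochR_deriv (lt_of_lt_of_le hc0 hy.1) hy.2).continuousAt).continuousWithinAt
  · rw [interior_Ico]
    intro y hy
    exact ((kochR_deriv (lt_trans hc0 hy.1) hy.2).differentiableAt).differentiableWithinAt
  · rw [interior_Ico]
    intro y hy
    have hy0 : 0 < y := lt_trans hc0 hy.1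
    rw [derivR_eq hy0 hy.2]
    apply div_nonneg
    · have : kochTheta * kochC ≤ kochTheta * y :=
        mul_le_mul_of_nonneg_left hy.1.le theta_pos.le
      rw [kochC, mul_div_cancel₀ _ theta_pos.ne'] at this
      linarith
    · exact mul_nonneg hy0.le (by linarith [hy.2])

lemma main_ineq {x : ℝ} (hx0 : 0 < x) (hx1 : x < 1) : kochF x ≤ 1 := by
  have hc3 := third_lt_c
  have hc1 := c_lt_one
  have hc0 : 0 < kochC := lt_trans (by norm_num) hc3
  -- F is ≤ 1 on (0, 1/3]
  have hreg1 : ∀ z : ℝ, 0 < z → z ≤ 1/3 → kochF z ≤ 1 := by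
    intro z hz0 hz3
    have hmono : MonotoneOn kochF (Set.Icc z (1/3)) := by
      apply monotoneOn_of_deriv_nonneg (convex_Icc _ _) contF.continuousOn
      · rw [interior_Icc]
        intro y hy
        exact ((kochF_deriv (lt_trans hz0 hy.1)
          (by linarith [hy.2])).differentiableAt).differentiableWithinAt
      · rw [interior_Icc]
        intro y hy
        have hy0 : 0 < y := lt_trans hz0 hy.1
        have hy3 : y < 1/3 := hy.2
        apply derivF_nonneg hy0 (by linarith)
        have := Ranti (Set.mem_Ioc.mpr ⟨hy0, by linarith⟩)
          (Set.mem_Ioc.mpr ⟨by norm_num, hc3.le⟩) hy3.le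
        rw [kochR_third] at this
        exact this
    have := hmono (Set.mem_Icc.mpr ⟨le_refl z, hz3⟩)
      (Set.mem_Icc.mpr ⟨hz3, le_refl _⟩) hz3
    rw [kochF_third] at this
    exact this
  -- F is ≤ 1 on [1/3, c]
  have hreg2 : ∀ z : ℝ, 1/3 ≤ z → z ≤ kochC → kochF z ≤ 1 := by
    intro z hz3 hzc
    have hanti : AntitoneOn kochF (Set.Icc (1/3) kochC) := by
      apply antitoneOn_of_deriv_nonpos (convex_Icc _ _) contF.continuousOn
      · rw [interior_Icc]
        intro y hy
        exact ((kochF_deriv (by linarith [hy.1])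
          (by linarith [hy.2])).differentiableAt).differentiableWithinAt
      · rw [interior_Icc]
        intro y hy
        have hy0 : 0 < y := by linarith [hy.1]
        have hy1 : y < 1 := by linarith [hy.2]
        apply derivF_nonpos hy0 hy1
        have := Ranti (Set.mem_Ioc.mpr ⟨by norm_num, hc3.le⟩)
          (Set.mem_Ioc.mpr ⟨hy0, hy.2.le⟩) hy.1.le
        rw [kochR_third] at this
        exact this
    have := hanti (Set.mem_Icc.mpr ⟨le_refl _, hc3.le⟩)
      (Set.mem_Icc.mpr ⟨hz3, hzc⟩) hz3
    rw [kochF_third] at this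
    exact this
  rcases le_or_gt x (1/3) with h13 | h13
  · exact hreg1 x hx0 h13
  rcases le_or_gt x kochC with hxc | hxc
  · exact hreg2 x h13.le hxc
  -- region 3 : c < x < 1
  have hFc : kochF kochC ≤ 1 := hreg2 kochC hc3.le le_rfl
  rcases le_or_gt (kochR x) 0 with hsgn | hsgn
  · -- R ≤ 0 on [c, x], F antitone there
    have hanti : AntitoneOn kochF (Set.Icc kochC x) := by
      apply antitoneOn_of_deriv_nonpos (convex_Icc _ _) contF.continuousOn
      · rw [interior_Icc]
        intro y hy
        exact ((kochF_deriv (lt_trans hc0 hy.1)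
          (lt_trans hy.2 hx1)).differentiableAt).differentiableWithinAt
      · rw [interior_Icc]
        intro y hy
        have hy0 : 0 < y := lt_trans hc0 hy.1
        have hy1 : y < 1 := lt_trans hy.2 hx1
        apply derivF_nonpos hy0 hy1
        have := Rmono (Set.mem_Ico.mpr ⟨hy.1.le, hy1⟩)
          (Set.mem_Ico.mpr ⟨hxc.le, hx1⟩) hy.2.le
        linarith
    have := hanti (Set.mem_Icc.mpr ⟨le_refl _, hxc.le⟩)
      (Set.mem_Icc.mpr ⟨hxc.le, le_refl _⟩) hxc.le
    linarith
  · -- R ≥ 0 on [x, 1), F monotone on [x, 1]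
    have hmono : MonotoneOn kochF (Set.Icc x 1) := by
      apply monotoneOn_of_deriv_nonneg (convex_Icc _ _) contF.continuousOn
      · rw [interior_Icc]
        intro y hy
        exact ((kochF_deriv (lt_trans hx0 hy.1)
          hy.2).differentiableAt).differentiableWithinAt
      · rw [interior_Icc]
        intro y hy
        have hy0 : 0 < y := lt_trans hx0 hy.1
        apply derivF_nonneg hy0 hy.2
        have := Rmono (Set.mem_Ico.mpr ⟨hxc.le, hx1⟩)
          (Set.mem_Ico.mpr ⟨le_trans hxc.le hy.1.le, hy.2⟩) hy.1.le
        linarith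
    have := hmono (Set.mem_Icc.mpr ⟨le_refl _, hx1.le⟩)
      (Set.mem_Icc.mpr ⟨hx1.le, le_refl _⟩) hx1.le
    rw [kochF_one] at this
    exact this

theorem stmt_3 (a s : ℝ) (ha0 : 0 < a) (ha1 : a < 1) (hs : 0 ≤ s)
    (heq : a ^ s + 2 * ((1 - a ^ 2) / 2) ^ s = 1) :
    s ≤ Real.log 4 / Real.log 3 := by
  have t2 : Real.log 4 / Real.log 3 = 2 * kochTheta := by
    rw [kochTheta]
    rw [show (4:ℝ) = 2^2 by norm_num, Real.log_pow]
    push_cast; ring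
  rw [t2]
  by_contra hlt
  push_neg at hlt
  have ha2 : a ^ 2 < 1 := by nlinarith
  have hb0 : 0 < (1 - a ^ 2)/2 := by linarith
  have hb1 : (1 - a ^ 2)/2 < 1 := by nlinarith
  have h1 : a ^ s < a ^ (2 * kochTheta) :=
    Real.rpow_lt_rpow_of_exponent_gt ha0 ha1 hlt
  have h2 : ((1 - a ^ 2)/2) ^ s < ((1 - a ^ 2)/2) ^ (2 * kochTheta) :=
    Real.rpow_lt_rpow_of_exponent_gt hb0 hb1 hlt
  have hx0 : 0 < a ^ 2 := by positivity
  have hmain := main_ineq hx0 ha2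
  have hpow : (a ^ 2 : ℝ) ^ kochTheta = a ^ (2 * kochTheta) := by
    rw [← Real.rpow_natCast a 2, ← Real.rpow_mul ha0.le]
    norm_num
  unfold kochF at hmain
  rw [hpow] at hmain
  linarith
end

section
/- The function dim(a), defined for a ∈ (0,1) as the unique s ≥ 0 with a^s + 2((1-a²)/2)^s = 1, satisfies dim(a) → 1 as a → 0⁺. -/
open Real Filter Set

theorem stmt_6 (d : ℝ → ℝ)
    (hd : ∀ a ∈ Set.Ioo (0 : ℝ) 1,
      0 ≤ d a ∧ a ^ (d a) + 2 * ((1 - a ^ 2) / 2) ^ (d a) = 1) :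
    Filter.Tendsto d (nhdsWithin 0 (Set.Ioo (0 : ℝ) 1)) (nhds 1) := by
  have hlog2 : (0:ℝ) < Real.log 2 := Real.log_pos (by norm_num)
  set L : ℝ → ℝ := fun a => Real.log 2 / (-Real.log ((1 - a ^ 2) / 2)) with hL
  set U : ℝ → ℝ := fun a => Real.log ((1 - Real.sqrt a) / 2) / Real.log ((1 - a ^ 2) / 2) with hU
  have hinner : ContinuousAt (fun a : ℝ => (1 - a ^ 2) / 2) 0 := by fun_prop
  have hlogc : ContinuousAt (fun a : ℝ => Real.log ((1 - a ^ 2) / 2)) 0 :=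
    hinner.log (by norm_num)
  have hhalf : Real.log ((1:ℝ) / 2) = -Real.log 2 := by
    rw [one_div, Real.log_inv]
  have hlog0 : Real.log ((1 - (0:ℝ) ^ 2) / 2) = -Real.log 2 := by
    rw [show ((1 - (0:ℝ) ^ 2) / 2) = 1/2 by norm_num]; exact hhalf
  have hLlim : Tendsto L (nhdsWithin 0 (Set.Ioo (0:ℝ) 1)) (nhds 1) := by
    have hc : ContinuousAt L 0 := by
      apply ContinuousAt.div continuousAt_const hlogc.neg
      show -Real.log ((1 - (0:ℝ) ^ 2) / 2) ≠ 0
      rw [hlog0]; simpa using hlog2.ne'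
    have hval : L 0 = 1 := by
      simp only [hL, hlog0]
      field_simp
    have := hc.tendsto
    rw [hval] at this
    exact this.mono_left nhdsWithin_le_nhds
  have hUlim : Tendsto U (nhdsWithin 0 (Set.Ioo (0:ℝ) 1)) (nhds 1) := by
    have hnum : ContinuousAt (fun a : ℝ => Real.log ((1 - Real.sqrt a) / 2)) 0 := by
      have h1 : ContinuousAt (fun a : ℝ => (1 - Real.sqrt a) / 2) 0 := by
        fun_prop
      exact h1.log (by norm_num)
    have hc : ContinuousAt U 0 := by
      apply ContinuousAt.div hnum hlogc
      rw [hlog0]; simpa using hlog2.ne'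
    have hval : U 0 = 1 := by
      simp only [hU, Real.sqrt_zero, hlog0, sub_zero]
      rw [hhalf]
      field_simp
    have := hc.tendsto
    rw [hval] at this
    exact this.mono_left nhdsWithin_le_nhds
  have hev : ∀ᶠ a in nhdsWithin 0 (Set.Ioo (0:ℝ) 1), a ∈ Set.Ioo (0:ℝ) 1 ∧ a < 1/2 := by
    filter_upwards [self_mem_nhdsWithin,
      eventually_nhdsWithin_of_eventually_nhds (Iio_mem_nhds (by norm_num : (0:ℝ) < 1/2))]
      with a h1 h2
    exact ⟨h1, h2⟩
  -- main estimates
  have key : ∀ a : ℝ, a ∈ Set.Ioo (0:ℝ) 1 → a < 1/2 → L a ≤ d a ∧ d a ≤ U a := by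
    intro a ha ha2
    obtain ⟨ha0, ha1⟩ := ha
    obtain ⟨hs0, heq⟩ := hd a ⟨ha0, ha1⟩
    set b := (1 - a ^ 2) / 2 with hb
    have hb0 : 0 < b := by rw [hb]; nlinarith
    have hb1 : b < 1 := by rw [hb]; nlinarith
    have hblog : Real.log b < 0 := Real.log_neg hb0 hb1
    have has : 0 < a ^ d a := Real.rpow_pos_of_pos ha0 _
    have hbs_pos : 0 < b ^ d a := Real.rpow_pos_of_pos hb0 _
    have hbs_lt : b ^ d a < 1/2 := by linarith
    have h1 : d a * Real.log b < -Real.log 2 := by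
      have := Real.log_lt_log hbs_pos hbs_lt
      rw [Real.log_rpow hb0] at this
      calc d a * Real.log b < Real.log (1/2) := this
        _ = -Real.log 2 := hhalf
    have hlow : L a < d a := by
      rw [hL]
      rw [div_lt_iff₀ (by linarith : (0:ℝ) < -Real.log ((1 - a ^ 2) / 2))]
      rw [mul_neg]
      linarith
    have hb4 : (1/4:ℝ) ≤ b := by rw [hb]; nlinarith
    have hlog4 : -(2 * Real.log 2) ≤ Real.log b := by
      have h := Real.log_le_log (by norm_num : (0:ℝ) < 1/4) hb4
      have : Real.log (1/4:ℝ) = -(2 * Real.log 2) := by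
        rw [show (1/4:ℝ) = (2:ℝ)⁻¹ ^ 2 by norm_num, Real.log_pow, Real.log_inv]
        push_cast; ring
      linarith
    have hd2 : 1/2 ≤ d a := by nlinarith
    have hsq : a ^ (d a) ≤ Real.sqrt a := by
      rw [Real.sqrt_eq_rpow]
      exact Real.rpow_le_rpow_of_exponent_ge ha0 ha1.le hd2
    have hsa1 : Real.sqrt a < 1 := by
      rw [show (1:ℝ) = Real.sqrt 1 by simp]
      exact Real.sqrt_lt_sqrt ha0.le (by linarith)
    have hbs_ge : (1 - Real.sqrt a)/2 ≤ b ^ d a := by linarith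
    have h2 : Real.log ((1 - Real.sqrt a)/2) ≤ d a * Real.log b := by
      have := Real.log_le_log (by linarith : (0:ℝ) < (1 - Real.sqrt a)/2) hbs_ge
      rwa [Real.log_rpow hb0] at this
    have hupp : d a ≤ U a := by
      rw [hU]
      rw [le_div_iff_of_neg hblog]
      exact h2
    exact ⟨hlow.le, hupp⟩
  apply tendsto_of_tendsto_of_tendsto_of_le_of_le' hLlim hUlim
  · filter_upwards [hev] with a ⟨ha, ha2⟩ using (key a ha ha2).1
  · filter_upwards [hev] with a ⟨ha, ha2⟩ using (key a ha ha2).2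
end

section
/- The function dim(a), defined for a ∈ (0,1) as the unique s ≥ 0 with a^s + 2((1-a²)/2)^s = 1, satisfies dim(a) → 1 as a → 1⁻. -/
theorem stmt_7 (d : ℝ → ℝ)
    (hd : ∀ a ∈ Set.Ioo (0 : ℝ) 1,
      0 ≤ d a ∧ a ^ (d a) + 2 * ((1 - a ^ 2) / 2) ^ (d a) = 1) :
    Filter.Tendsto d (nhdsWithin 1 (Set.Ioo (0 : ℝ) 1)) (nhds 1) := by
  rw [Metric.tendsto_nhdsWithin_nhds]
  intro ε hε
  refine ⟨(1/2 : ℝ) ^ (1/ε), Real.rpow_pos_of_pos (by norm_num) _, ?_⟩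
  intro a ha hdist
  obtain ⟨ha0, ha1⟩ := ha
  obtain ⟨hs0, heq⟩ := hd a ⟨ha0, ha1⟩
  set s := d a with hsdef
  set b : ℝ := (1 - a ^ 2) / 2 with hb
  have hb0 : 0 < b := by
    have : a ^ 2 < 1 := by nlinarith
    simp only [hb]; linarith
  have hb1 : b < 1 := by
    have : 0 < a ^ 2 := by positivity
    simp only [hb]; linarith
  have hdist' : 1 - a < (1/2 : ℝ) ^ (1/ε) := by
    rw [Real.dist_eq, abs_lt] at hdist
    linarith [hdist.1]
  -- key smallness: b ^ ε < 1/2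
  have hbe : b ^ ε < 1/2 := by
    have hblt : b < (1/2 : ℝ) ^ (1/ε) := by
      have : b ≤ 1 - a := by simp only [hb]; nlinarith
      linarith
    calc b ^ ε < ((1/2 : ℝ) ^ (1/ε)) ^ ε :=
          Real.rpow_lt_rpow hb0.le hblt hε
      _ = (1/2 : ℝ) := by
          rw [← Real.rpow_mul (by norm_num)]
          rw [show 1 / ε * ε = 1 from by field_simp, Real.rpow_one]
  -- lower bound: 1 < s
  have hlow : 1 < s := by
    by_contra h
    push_neg at h
    have h1 : a ≤ a ^ s := by
      calc a = a ^ (1:ℝ) := (Real.rpow_one a).symm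
        _ ≤ a ^ s := Real.rpow_le_rpow_of_exponent_ge ha0 ha1.le h
    have h2 : b ≤ b ^ s := by
      calc b = b ^ (1:ℝ) := (Real.rpow_one b).symm
        _ ≤ b ^ s := Real.rpow_le_rpow_of_exponent_ge hb0 hb1.le h
    have : 1 ≥ a + 2 * b := by rw [← heq]; linarith
    simp only [hb] at this
    nlinarith
  -- upper bound: s < 1 + ε
  have hup : s < 1 + ε := by
    by_contra h
    push_neg at h
    have h1 : a ^ s ≤ a := by
      calc a ^ s ≤ a ^ (1:ℝ) :=
            Real.rpow_le_rpow_of_exponent_ge ha0 ha1.le (by linarith)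
        _ = a := Real.rpow_one a
    have h2 : b ^ s ≤ b * b ^ ε := by
      calc b ^ s ≤ b ^ (1 + ε) :=
            Real.rpow_le_rpow_of_exponent_ge hb0 hb1.le h
        _ = b ^ (1:ℝ) * b ^ ε := by rw [← Real.rpow_add hb0]
        _ = b * b ^ ε := by rw [Real.rpow_one]
    have hkey : 1 ≤ a + 2 * (b * b ^ ε) := by rw [← heq]; linarith
    have hbeps0 : 0 < b ^ ε := Real.rpow_pos_of_pos hb0 ε
    have h1a : 1 - a > 0 := by linarith
    have : 2 * (b * b ^ ε) < 1 - a := by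
      have hb' : 2 * b = (1 - a) * (1 + a) := by simp only [hb]; ring
      have : (1 + a) * b ^ ε < 1 := by nlinarith
      nlinarith
    linarith
  rw [Real.dist_eq, abs_lt]
  constructor <;> linarith
end
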